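/- Let $f$ be holomorphic near $0$ with $f(z) = z + z^2 + O(z^3)$, and set $F(Z) = -1/f(-1/Z)$ for $|Z|$ large. Then $F(Z) = Z + 1 + O(1/Z)$ as $Z\to\infty$; in particular there exists $R>0$ such that $|F(Z) - Z - 1| < 1/2$ whenever $\mathrm{Re}(Z) > R$, and hence $F$ maps the half-plane $\{\mathrm{Re}(Z) > R\}$ into itself with $\mathrm{Re}(F(Z)) > \mathrm{Re}(Z) + 1/2$. -/
import Mathlib


open Filter Asymptotics

lemma pointwise_est (f : ℂ → ℂ) (c : ℝ) (z : ℂ) (hz : z ≠ 0) (hz1 : ‖z‖ ≤ 1)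
    (hzc : ‖z‖ * (1 + c) ≤ 1 / 2) (hg : ‖f z - z - z ^ 2‖ ≤ c * ‖z‖ ^ 3) :
    ‖-1 / f z - (-1 / z) - 1‖ ≤ 2 * (2 * c + 1) * ‖z‖ := by
  have hc0 : 0 ≤ c := by
    nlinarith [norm_nonneg (f z - z - z ^ 2), pow_pos (norm_pos_iff.2 hz) 3]
  have hznorm : 0 < ‖z‖ := norm_pos_iff.2 hz
  have hfz_lb : ‖z‖ / 2 ≤ ‖f z‖ := by
    have h1 : ‖f z - z‖ ≤ ‖z‖ / 2 := by
      have : f z - z = (f z - z - z ^ 2) + z ^ 2 := by ring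
      rw [this]
      have := norm_add_le (f z - z - z ^ 2) (z ^ 2)
      have h2 : ‖z ^ 2‖ = ‖z‖ ^ 2 := norm_pow z 2
      nlinarith [norm_nonneg (f z - z - z ^ 2)]
    have := norm_sub_norm_le (f z) z
    have h3 : ‖f z - z‖ ≥ ‖f z‖ - ‖z‖ := by
      have := norm_sub_norm_le (f z) z; linarith [this]
    linarith [abs_norm_sub_norm_le (f z) z, (abs_le.1 (abs_norm_sub_norm_le (f z) z)).2,
      neg_le_of_abs_le (abs_norm_sub_norm_le (f z) z)]
  have hfz : f z ≠ 0 := by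
    intro h; rw [h, norm_zero] at hfz_lb; linarith
  have hid : -1 / f z - (-1 / z) - 1 =
      ((f z - z - z ^ 2) * (1 - z) - z ^ 3) / (z * f z) := by
    field_simp
    ring
  rw [hid, norm_div]
  have hnum : ‖(f z - z - z ^ 2) * (1 - z) - z ^ 3‖ ≤ (2 * c + 1) * ‖z‖ ^ 3 := by
    calc ‖(f z - z - z ^ 2) * (1 - z) - z ^ 3‖
        ≤ ‖(f z - z - z ^ 2) * (1 - z)‖ + ‖z ^ 3‖ := norm_sub_le _ _
      _ = ‖f z - z - z ^ 2‖ * ‖1 - z‖ + ‖z‖ ^ 3 := by rw [norm_mul, norm_pow]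
      _ ≤ (c * ‖z‖ ^ 3) * 2 + ‖z‖ ^ 3 := by
          have h1z : ‖(1 : ℂ) - z‖ ≤ 2 := by
            calc ‖(1 : ℂ) - z‖ ≤ ‖(1 : ℂ)‖ + ‖z‖ := norm_sub_le _ _
              _ ≤ 1 + 1 := by rw [norm_one]; linarith
              _ = 2 := by norm_num
          have := mul_le_mul hg h1z (norm_nonneg _) (by positivity)
          nlinarith [norm_nonneg (f z - z - z ^ 2), pow_nonneg (norm_nonneg z) 3]
      _ = (2 * c + 1) * ‖z‖ ^ 3 := by ring
  have hden : ‖z‖ ^ 2 / 2 ≤ ‖z * f z‖ := by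
    rw [norm_mul]
    calc ‖z‖ ^ 2 / 2 = ‖z‖ * (‖z‖ / 2) := by ring
      _ ≤ ‖z‖ * ‖f z‖ := by
          exact mul_le_mul_of_nonneg_left hfz_lb (le_of_lt hznorm)
  have hden0 : 0 < ‖z * f z‖ := norm_pos_iff.2 (mul_ne_zero hz hfz)
  rw [div_le_iff₀ hden0]
  calc ‖(f z - z - z ^ 2) * (1 - z) - z ^ 3‖ ≤ (2 * c + 1) * ‖z‖ ^ 3 := hnum
    _ = (2 * (2 * c + 1) * ‖z‖) * (‖z‖ ^ 2 / 2) := by ring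
    _ ≤ (2 * (2 * c + 1) * ‖z‖) * ‖z * f z‖ := by
        apply mul_le_mul_of_nonneg_left hden
        positivity

/-- In the coordinate `Z = -1/z`, a parabolic germ `f z = z + z² + O(z³)`
becomes `F Z = Z + 1 + O(1/Z)`; in particular `F` maps a right half-plane into
itself, translating it to the right by at least `1/2`. -/
theorem parabolic_fatou_coordinate_halfplane (f : ℂ → ℂ)
    (hol : ∃ U ∈ nhds (0 : ℂ), DifferentiableOn ℂ f U)
    (hf : (fun z : ℂ => f z - z - z ^ 2) =O[nhds 0] fun z : ℂ => z ^ 3) :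
    ((fun Z : ℂ => -1 / f (-1 / Z) - Z - 1) =O[Bornology.cobounded ℂ]
        fun Z : ℂ => 1 / Z) ∧
    ∃ R > (0 : ℝ), ∀ Z : ℂ, R < Z.re →
      ‖-1 / f (-1 / Z) - Z - 1‖ < 1 / 2 ∧
      Z.re + 1 / 2 < (-1 / f (-1 / Z)).re := by
  obtain ⟨c, hc, hbd⟩ := hf.exists_pos
  rw [IsBigOWith, Metric.eventually_nhds_iff] at hbd
  obtain ⟨δ, hδ, hb⟩ := hbd
  set ε : ℝ := min (δ / 2) (min 1 (1 / (2 * (1 + c)))) with hε_def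
  have hε : 0 < ε := by
    apply lt_min (by linarith)
    apply lt_min one_pos
    positivity
  have hε1 : ε ≤ 1 := le_trans (min_le_right _ _) (min_le_left _ _)
  have hεc : ε * (1 + c) ≤ 1 / 2 := by
    have h1 : ε ≤ 1 / (2 * (1 + c)) := le_trans (min_le_right _ _) (min_le_right _ _)
    have h2 : (0:ℝ) < 1 + c := by linarith
    have h3 : (1 / (2 * (1 + c))) * (1 + c) = 1 / 2 := by field_simp
    nlinarith
  set C : ℝ := 2 * (2 * c + 1) with hC_def
  have hC : 0 < C := by positivity
  -- key pointwise claim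
  have key : ∀ Z : ℂ, 1 / ε ≤ ‖Z‖ → ‖-1 / f (-1 / Z) - Z - 1‖ ≤ C * ‖1 / Z‖ := by
    intro Z hZ
    have hZ0 : Z ≠ 0 := by
      intro h; rw [h, norm_zero] at hZ
      have : 0 < 1 / ε := by positivity
      linarith
    set z : ℂ := -1 / Z with hz_def
    have hz0 : z ≠ 0 := by
      simp [hz_def, hZ0]
    have hzn : ‖z‖ = 1 / ‖Z‖ := by
      simp [hz_def, norm_div]
    have hzε : ‖z‖ ≤ ε := by
      rw [hzn]
      rw [div_le_iff₀ (norm_pos_iff.2 hZ0)]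
      rw [div_le_iff₀ hε] at hZ
      nlinarith
    have hzδ : ‖z‖ < δ := by
      have : ε ≤ δ / 2 := min_le_left _ _
      calc ‖z‖ ≤ ε := hzε
        _ ≤ δ / 2 := this
        _ < δ := by linarith
    have hg : ‖f z - z - z ^ 2‖ ≤ c * ‖z‖ ^ 3 := by
      have := hb (show dist z 0 < δ by simpa [dist_zero_right] using hzδ)
      simpa [norm_pow] using this
    have hzinv : -1 / z = Z := by
      rw [hz_def]; field_simp
    have := pointwise_est f c z hz0 (le_trans hzε hε1)
      (by nlinarith [norm_nonneg z]) hg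
    rw [hzinv] at this
    have hnormeq : ‖(1:ℂ) / Z‖ = ‖z‖ := by
      rw [hzn, norm_div, norm_one]
    rw [hnormeq]
    exact this
  constructor
  · rw [isBigO_iff]
    refine ⟨C, ?_⟩
    have hev : ∀ᶠ Z : ℂ in Bornology.cobounded ℂ, 1 / ε ≤ ‖Z‖ :=
      tendsto_norm_cobounded_atTop.eventually (eventually_ge_atTop (1 / ε))
    filter_upwards [hev] with Z hZ
    exact key Z hZ
  · have hRpos : (0:ℝ) < max (1 / ε) (2 * C) + 1 := by
      have h0 : (0:ℝ) < 1 / ε := by positivity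
      have := le_max_left (1 / ε) (2 * C); linarith
    refine ⟨max (1 / ε) (2 * C) + 1, hRpos, ?_⟩
    intro Z hZ
    have hre : Z.re ≤ ‖Z‖ := Complex.re_le_norm Z
    have hZn : max (1 / ε) (2 * C) + 1 < ‖Z‖ := lt_of_lt_of_le hZ hre
    have h1 : 1 / ε ≤ ‖Z‖ := by
      have := le_max_left (1 / ε) (2 * C); linarith
    have h2 : 2 * C < ‖Z‖ := by
      have := le_max_right (1 / ε) (2 * C); linarith
    have hbound := key Z h1
    have hZpos : 0 < ‖Z‖ := by linarith
    have hnorm1Z : ‖(1:ℂ) / Z‖ = 1 / ‖Z‖ := by rw [norm_div, norm_one]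
    have hlt : ‖-1 / f (-1 / Z) - Z - 1‖ < 1 / 2 := by
      calc ‖-1 / f (-1 / Z) - Z - 1‖ ≤ C * ‖(1:ℂ) / Z‖ := hbound
        _ = C / ‖Z‖ := by rw [hnorm1Z]; ring
        _ < 1 / 2 := by rw [div_lt_iff₀ hZpos]; linarith
    refine ⟨hlt, ?_⟩
    set w : ℂ := -1 / f (-1 / Z) with hw
    have hre2 : |(w - Z - 1).re| ≤ ‖w - Z - 1‖ := Complex.abs_re_le_norm _
    have : (w - Z - 1).re = w.re - Z.re - 1 := by simp
    have := neg_le_of_abs_le hre2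
    have hwre : w.re - Z.re - 1 > -(1/2) := by
      rw [show (w - Z - 1).re = w.re - Z.re - 1 by simp] at hre2
      have := neg_abs_le (w.re - Z.re - 1)
      have habs := hre2
      nlinarith [abs_nonneg (w.re - Z.re - 1), neg_abs_le (w.re - Z.re - 1)]
    linarith
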